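/- arXiv:2503.02492 — 3 statements merged into one kernel-verified Lean document; each statement's English description precedes it below -/
import Mathlib

section
/- Let N ≥ 1 be an integer, let −1 = ω_0 < ω_1 < … < ω_N = 1 be real numbers with ω_j = −ω_{N−j} for all j, let ω ∈ ℂ with |ω| = 1, and let a_0, …, a_N ∈ ℂ with a_0 = a_N = −ω. Define S(s) = ∑_{j=0}^{N} a_j e^{iπω_j s}. Then for all real σ₁ ≤ σ₂ there exist constants C > 0 and T > 0 such that for every s = σ + it with σ₁ ≤ σ ≤ σ₂ and |t| ≥ T one has S(s) ≠ 0, cos(πs) ≠ 0, and |1/S(s) + 1/(2ω·cos(πs))| ≤ C·e^{−π(2−ω_{N−1})|t|}. -/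
/-!
The two extreme terms combine to `a₀ e^{-iπs} + a_N e^{iπs} = -2ω cos(πs) =: -D`, so
`S = R - D` where `R` collects the interior terms. Since `|ω_j| ≤ ω_{N-1}` for `0 < j < N`,
`|R| = O(e^{πω_{N-1}|t|})`, whereas `|D| ≥ 2 sinh(π|t|) ≍ e^{π|t|}`. Hence `|R| ≤ |D|/2` for large
`|t|`, and `1/S + 1/D = R/(SD)` is `O(e^{πω_{N-1}|t|} / e^{2π|t|})`.
-/

open Complex

theorem Complex.sinh_abs_im_le_norm_cos (z : ℂ) : Real.sinh |z.im| ≤ ‖cos z‖ := by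
  have h := abs_norm_sub_norm_le (exp (-z * I)) (-exp (z * I))
  rw [norm_neg, sub_neg_eq_add, add_comm, ← two_cos, norm_mul, Complex.norm_two, norm_exp,
    norm_exp] at h
  have hre : ∀ w : ℂ, (w * I).re = -w.im := fun w => by simp
  rw [hre, hre, neg_im, neg_neg] at h
  rw [← Real.abs_sinh, Real.sinh_eq, abs_div, abs_two]
  linarith

theorem Real.exp_div_four_le_sinh {x : ℝ} (hx : Real.log 2 ≤ 2 * x) :
    Real.exp x / 4 ≤ Real.sinh x := by
  have h2 : 2 ≤ Real.exp x * Real.exp x := by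
    rw [← Real.exp_add, ← two_mul]
    exact (Real.exp_log two_pos).symm.le.trans (Real.exp_le_exp.2 hx)
  have hinv : Real.exp (-x) * Real.exp x = 1 := by
    rw [← Real.exp_add, neg_add_cancel, Real.exp_zero]
  rw [Real.sinh_eq]
  nlinarith [Real.exp_pos x, Real.exp_pos (-x)]

theorem Complex.exp_pi_mul_div_four_le_norm_cos_pi_mul {s : ℂ} (hs : 1 ≤ |s.im|) :
    Real.exp (Real.pi * |s.im|) / 4 ≤ ‖cos (Real.pi * s)‖ := by
  have him : |(Real.pi * s : ℂ).im| = Real.pi * |s.im| := by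
    simp [abs_mul, abs_of_pos Real.pi_pos]
  refine him ▸ (Real.exp_div_four_le_sinh ?_).trans (sinh_abs_im_le_norm_cos _)
  nlinarith [Real.log_two_lt_d9, Real.pi_gt_three]

theorem Complex.norm_exp_I_mul_ofReal_mul_le {c b : ℝ} (hc : |c| ≤ b) (s : ℂ) :
    ‖exp (I * c * s)‖ ≤ Real.exp (b * |s.im|) := by
  rw [norm_exp, Real.exp_le_exp]
  have : (I * c * s).re = -(c * s.im) := by simp
  rw [this]
  exact (neg_le_abs _).trans (abs_mul c s.im ▸ mul_le_mul_of_nonneg_right hc (abs_nonneg _))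

theorem norm_sum_mul_exp_le {ι : Type*} (t : Finset ι) (A : ι → ℂ) (w : ι → ℝ) {b : ℝ}
    (hw : ∀ j ∈ t, |w j| ≤ b) (s : ℂ) :
    ‖∑ j ∈ t, A j * exp (I * Real.pi * w j * s)‖ ≤
      (∑ j ∈ t, ‖A j‖) * Real.exp (Real.pi * b * |s.im|) := by
  rw [Finset.sum_mul]
  refine (norm_sum_le _ _).trans (Finset.sum_le_sum fun j hj => ?_)
  rw [norm_mul]
  gcongr
  have hc : |Real.pi * w j| ≤ Real.pi * b := by
    rw [abs_mul, abs_of_pos Real.pi_pos]; exact mul_le_mul_of_nonneg_left (hw j hj) Real.pi_pos.le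
  simpa [mul_assoc] using norm_exp_I_mul_ofReal_mul_le hc s

theorem ne_zero_and_norm_one_div_sub_add_one_div_le {K : Type*} [NormedField K] {D R : K} {d : ℝ}
    (hd : 0 < d) (hD : d ≤ ‖D‖) (hR : ‖R‖ ≤ d / 2) :
    R - D ≠ 0 ∧ ‖1 / (R - D) + 1 / D‖ ≤ 2 * ‖R‖ / d ^ 2 := by
  have hRD : d / 2 ≤ ‖R - D‖ := by
    have := norm_sub_norm_le D R; rw [norm_sub_rev] at this; linarith
  have hRD0 : R - D ≠ 0 := norm_pos_iff.1 (by linarith)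
  have hD0 : D ≠ 0 := norm_pos_iff.1 (by linarith)
  refine ⟨hRD0, ?_⟩
  rw [div_add_div _ _ hRD0 hD0, one_mul, mul_one, add_sub_cancel, norm_div, norm_mul]
  calc ‖R‖ / (‖R - D‖ * ‖D‖) ≤ ‖R‖ / (d / 2 * d) := by gcongr
    _ = 2 * ‖R‖ / d ^ 2 := by field_simp

theorem sum_range_eq_sum_Ioo_sub_two_mul_cos {N : ℕ} (hN : 1 ≤ N) {w : ℕ → ℝ} (hw0 : w 0 = -1)
    (hwN : w N = 1) {ω : ℂ} {A : ℕ → ℂ} (hA0 : A 0 = -ω) (hAN : A N = -ω) (s : ℂ) :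
    ∑ j ∈ Finset.range (N + 1), A j * exp (I * Real.pi * w j * s) =
      ∑ j ∈ Finset.Ioo 0 N, A j * exp (I * Real.pi * w j * s) - 2 * ω * cos (Real.pi * s) := by
  have hrange : Finset.range (N + 1) = insert 0 (insert N (Finset.Ioo 0 N)) := by
    ext j; simp only [Finset.mem_Ioo, Finset.mem_range, Finset.mem_insert]; omega
  rw [hrange, Finset.sum_insert (by simp; omega), Finset.sum_insert (by simp), hA0, hAN, hw0, hwN,
    mul_assoc 2 ω, mul_left_comm, two_cos]
  push_cast
  ring_nf

theorem abs_le_apply_pred_of_mem_Ioo {N : ℕ} {w : ℕ → ℝ} (hmono : ∀ j < N, w j < w (j + 1))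
    (hsym : ∀ j ≤ N, w j = -w (N - j)) {j : ℕ} (hj : j ∈ Finset.Ioo 0 N) : |w j| ≤ w (N - 1) := by
  rw [Finset.mem_Ioo] at hj
  have hw : MonotoneOn w (Set.Iic N) :=
    (strictMonoOn_Iic_of_lt_succ fun m hm => (Order.succ_eq_add_one m).symm ▸ hmono m hm).monotoneOn
  have hlow : w 1 ≤ w j := hw (by simp; omega) (by simp; omega) (by omega)
  have hup : w j ≤ w (N - 1) := hw (by simp; omega) (by simp) (by omega)
  rw [hsym 1 (by omega)] at hlow
  exact abs_le.2 ⟨by linarith, hup⟩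

theorem S_inverse_asymptotics_general (N : ℕ) (hN : 1 ≤ N) (w : ℕ → ℝ)
    (hw0 : w 0 = -1) (hwN : w N = 1)
    (hmono : ∀ j < N, w j < w (j + 1)) (hsym : ∀ j ≤ N, w j = -w (N - j))
    (ω : ℂ) (hω : ‖ω‖ = 1) (A : ℕ → ℂ) (hA0 : A 0 = -ω) (hAN : A N = -ω)
    (σ₁ σ₂ : ℝ) :
    ∃ C : ℝ, 0 < C ∧ ∃ T : ℝ, 0 < T ∧ ∀ s : ℂ, σ₁ ≤ s.re → s.re ≤ σ₂ → T ≤ |s.im| →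
      (∑ j ∈ Finset.range (N + 1), A j * Complex.exp (Complex.I * Real.pi * w j * s)) ≠ 0 ∧
      Complex.cos (Real.pi * s) ≠ 0 ∧
      ‖1 / (∑ j ∈ Finset.range (N + 1), A j * Complex.exp (Complex.I * Real.pi * w j * s)) +
          1 / (2 * ω * Complex.cos (Real.pi * s))‖ ≤
        C * Real.exp (-Real.pi * (2 - w (N - 1)) * |s.im|) := by
  set C₁ := ∑ j ∈ Finset.Ioo 0 N, ‖A j‖
  have hgap : 0 < Real.pi * (1 - w (N - 1)) := by
    have := hmono (N - 1) (by omega)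
    rw [Nat.sub_add_cancel hN, hwN] at this
    exact mul_pos Real.pi_pos (by linarith)
  obtain ⟨T₀, hT₀⟩ := Filter.eventually_atTop.1 ((Real.tendsto_exp_atTop.comp
    (Filter.tendsto_id.const_mul_atTop hgap)).eventually_ge_atTop (4 * C₁))
  refine ⟨8 * C₁ + 1, by positivity, max T₀ 1, by positivity, fun s _ _ hT => ?_⟩
  set t := |s.im|
  have hcos := exp_pi_mul_div_four_le_norm_cos_pi_mul (le_of_max_le_right hT)
  have hD : Real.exp (Real.pi * t) / 2 ≤ ‖2 * ω * cos (Real.pi * s)‖ := by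
    rw [norm_mul, norm_mul, hω, Complex.norm_two]; linarith
  have hR := norm_sum_mul_exp_le _ A w (fun j hj => abs_le_apply_pred_of_mem_Ioo hmono hsym hj) s
  have hRsmall : C₁ * Real.exp (Real.pi * w (N - 1) * t) ≤ Real.exp (Real.pi * t) / 4 := by
    have := mul_le_mul_of_nonneg_right (hT₀ t (le_of_max_le_left hT)) (Real.exp_pos
      (Real.pi * w (N - 1) * t)).le
    rw [Function.comp_apply, id, ← Real.exp_add] at this
    ring_nf at this ⊢; linarith
  rw [sum_range_eq_sum_Ioo_sub_two_mul_cos hN hw0 hwN hA0 hAN]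
  obtain ⟨hS, hbound⟩ :=
    ne_zero_and_norm_one_div_sub_add_one_div_le (by positivity) hD (hR.trans (by linarith))
  refine ⟨hS, fun h => ?_, hbound.trans ?_⟩
  · rw [h, norm_zero] at hcos; linarith [Real.exp_pos (Real.pi * t)]
  calc 2 * _ / (Real.exp (Real.pi * t) / 2) ^ 2
      ≤ 2 * (C₁ * Real.exp (Real.pi * w (N - 1) * t)) / (Real.exp (Real.pi * t) / 2) ^ 2 := by
        gcongr
    _ = 8 * C₁ * Real.exp (-Real.pi * (2 - w (N - 1)) * t) := by
        rw [show Real.exp (Real.pi * w (N - 1) * t) =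
            Real.exp (Real.pi * t) ^ 2 * Real.exp (-Real.pi * (2 - w (N - 1)) * t) by
          rw [← Real.exp_nat_mul, ← Real.exp_add]; ring_nf]
        field_simp; ring
    _ ≤ (8 * C₁ + 1) * Real.exp (-Real.pi * (2 - w (N - 1)) * t) := by gcongr; linarith

/-- for `S(s) = ∑_{j≤N} a_j e^{iπω_j s}` with `-1 = ω_0 < ⋯ < ω_N = 1`,
`ω_j = -ω_{N-j}`, `a_0 = a_N = -ω`, `|ω| = 1`, on every vertical strip one has, for
`|Im s|` large, `S(s) ≠ 0`, `cos(πs) ≠ 0` and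
`|1/S(s) + 1/(2ω cos(πs))| ≤ C e^{-π(2-ω_{N-1})|Im s|}`. -/
theorem S_inverse_asymptotics (N : ℕ) (hN : 1 ≤ N) (w : ℕ → ℝ)
    (hw0 : w 0 = -1) (hwN : w N = 1)
    (hmono : ∀ j < N, w j < w (j + 1)) (hsym : ∀ j ≤ N, w j = -w (N - j))
    (ω : ℂ) (hω : ‖ω‖ = 1) (A : ℕ → ℂ) (hA0 : A 0 = -ω) (hAN : A N = -ω)
    (σ₁ σ₂ : ℝ) (hσ : σ₁ ≤ σ₂) :
    ∃ C : ℝ, 0 < C ∧ ∃ T : ℝ, 0 < T ∧ ∀ s : ℂ, σ₁ ≤ s.re → s.re ≤ σ₂ → T ≤ |s.im| →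
      (∑ j ∈ Finset.range (N + 1), A j * Complex.exp (Complex.I * Real.pi * w j * s)) ≠ 0 ∧
      Complex.cos (Real.pi * s) ≠ 0 ∧
      ‖1 / (∑ j ∈ Finset.range (N + 1), A j * Complex.exp (Complex.I * Real.pi * w j * s)) +
          1 / (2 * ω * Complex.cos (Real.pi * s))‖ ≤
        C * Real.exp (-Real.pi * (2 - w (N - 1)) * |s.im|) :=
  S_inverse_asymptotics_general N hN w hw0 hwN hmono hsym ω hω A hA0 hAN σ₁ σ₂
end

section
/- Let μ > 0 be real and θ ∈ (0, π), and let S_θ = { z ∈ ℂ, z ≠ 0 : −θ < arg(z) < π } (principal argument). Suppose ψ : S_θ → ℂ is holomorphic and satisfies the three-term functional equation ψ(z) = ψ(z+1) + (z+1)^{−2μ−1}·ψ(z/(z+1)) (principal branch of the complex power) for every z ∈ S_θ such that z + 1 ∈ S_θ and z/(z+1) ∈ S_θ. Then ψ has a holomorphic continuation to the cut plane { z ∈ ℂ, z ≠ 0 : |arg(z)| < π } = ℂ ∖ (−∞, 0]; that is, there exists a holomorphic function Ψ on ℂ ∖ (−∞, 0] with Ψ = ψ on S_θ. -/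
/-!
Write `T z = z + 1` and `V z = z / (z + 1)`. Starting from `D₀ = S_θ` and `ψ₀ = ψ`, put
`D_{n+1} = {z ∈ ℂ ∖ (-∞, 0] : T z, V z ∈ D_n}` and
`ψ_{n+1}(z) = ψ_n(z + 1) + (z + 1)^s ψ_n(z / (z + 1))`. Since `S_θ` is invariant under `T` and
`V`, the functional equation gives `ψ_{n+1} = ψ_n` on `D_n`, so the `ψ_n` glue to a holomorphic
function on `⋃ D_n`, and it remains to see that this union is the whole cut plane.

Now `S_θ` is the union of the upper half-plane and the half-plane `e^{-iθ} ℍ`. Points of the cut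
plane with `Im z ≥ 0` lie in `S_θ`. For `z = x + iy` with `y < 0`, the compositions of `n` maps
`T`, `V` act on `z` as Möbius maps `(az + b)/(cz + d)` with `a, b, c, d ∈ ℕ`, `ad - bc = 1` and
`a + b + c + d ≥ n + 2`, and such an image lies outside `e^{-iθ} ℍ` only if
`(ax + b)(cx + d) + ac y² ≤ -y cot θ`, which bounds `a + b + c + d`.
-/

open Complex

noncomputable section

/-- The cut sector `S_θ = {z ≠ 0 : -θ < arg z < π}`. -/
def cutSector (θ : ℝ) : Set ℂ :=
  {z : ℂ | z ≠ 0 ∧ -θ < Complex.arg z ∧ Complex.arg z < Real.pi}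

namespace PeriodFunction

open Set
open scoped Real Topology

theorem exists_differentiableOn_iUnion {𝕜 E F : Type*} [NontriviallyNormedField 𝕜]
    [NormedAddCommGroup E] [NormedSpace 𝕜 E] [NormedAddCommGroup F] [NormedSpace 𝕜 F]
    {U : ℕ → Set E} {f : ℕ → E → F} (hU : ∀ n, IsOpen (U n)) (hmono : Monotone U)
    (hf : ∀ n, DifferentiableOn 𝕜 (f n) (U n)) (hcompat : ∀ n, EqOn (f (n + 1)) (f n) (U n)) :
    ∃ g : E → F, DifferentiableOn 𝕜 g (⋃ n, U n) ∧ ∀ n, EqOn g (f n) (U n) := by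
  classical
  have hcompat_le {m n : ℕ} (hmn : m ≤ n) : EqOn (f n) (f m) (U m) := by
    induction n, hmn using Nat.le_induction with
    | base => exact eqOn_refl _ _
    | succ n hmn ih => exact fun z hz => (hcompat n (hmono hmn hz)).trans (ih hz)
  let g : E → F := fun z => if h : ∃ n, z ∈ U n then f (Nat.find h) z else 0
  have hg (n : ℕ) : EqOn g (f n) (U n) := fun z hz => by
    have h : ∃ n, z ∈ U n := ⟨n, hz⟩
    simp only [g, dif_pos h]
    exact (hcompat_le (Nat.find_min' h hz) (Nat.find_spec h)).symm
  refine ⟨g, fun z hz => ?_, hg⟩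
  obtain ⟨n, hn⟩ := mem_iUnion.1 hz
  have hnhds : U n ∈ 𝓝 z := (hU n).mem_nhds hn
  exact ((hf n).differentiableAt hnhds |>.congr_of_eventuallyEq
    (Filter.eventuallyEq_of_mem hnhds (hg n))).differentiableWithinAt

section Mobius

variable {a b c d : ℕ} {z : ℂ}

def mobius (a b c d : ℕ) (z : ℂ) : ℂ := (a * z + b) / (c * z + d)

theorem mobius_one_zero_zero_one (z : ℂ) : mobius 1 0 0 1 z = z := by
  simp [mobius]

theorem mobius_one_zero_one_one (z : ℂ) : mobius 1 0 1 1 z = z / (z + 1) := by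
  simp [mobius]

theorem natCast_mul_add_natCast_ne_zero (hz : z.im < 0) (hd : d ≠ 0) : (c : ℂ) * z + d ≠ 0 := by
  intro h
  have him := congrArg im h
  have hre := congrArg re h
  simp only [add_im, mul_im, natCast_re, natCast_im, zero_mul, add_zero, zero_im,
    add_re, mul_re, sub_zero, zero_re] at him hre
  obtain rfl : c = 0 := by exact_mod_cast (mul_eq_zero.1 him).resolve_right hz.ne
  exact hd (by simpa using hre)

theorem mobius_add_one (h : (c : ℂ) * z + d ≠ 0) :
    mobius a b c d z + 1 = mobius (a + c) (b + d) c d z := by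
  simp only [mobius]
  push_cast
  rw [div_add_one h]
  ring

theorem mobius_div_mobius_add_one (h : (c : ℂ) * z + d ≠ 0) :
    mobius a b c d z / (mobius a b c d z + 1) = mobius a b (a + c) (b + d) z := by
  rw [mobius_add_one h]
  simp only [mobius]
  rw [div_div_div_cancel_right₀ h]

theorem re_mobius :
    (mobius a b c d z).re =
      ((a * z.re + b) * (c * z.re + d) + a * c * z.im ^ 2) / normSq (c * z + d) := by
  simp only [mobius, div_re, normSq_apply, add_re, add_im, mul_re, mul_im, natCast_re,
    natCast_im, zero_mul, sub_zero, add_zero]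
  ring

theorem im_mobius (hdet : a * d = b * c + 1) :
    (mobius a b c d z).im = z.im / normSq (c * z + d) := by
  have hdetR : (a : ℝ) * d = b * c + 1 := by exact_mod_cast hdet
  simp only [mobius, div_im, normSq_apply, add_re, add_im, mul_re, mul_im, natCast_re,
    natCast_im, zero_mul, sub_zero, add_zero]
  rw [← sub_div]
  congr 1
  linear_combination z.im * hdetR

end Mobius

theorem exists_sum_le_of_det_eq_one (x y K : ℝ) (hy : y ≠ 0) :
    ∃ E : ℝ, ∀ a b c d : ℕ, a * d = b * c + 1 →
      (a * x + b) * (c * x + d) + a * c * y ^ 2 ≤ K → (a + b + c + d : ℝ) ≤ E := by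
  have hy2 : 0 < y ^ 2 := by positivity
  set C := (1 + 4 * |K|) / (4 * y ^ 2)
  set M := 1 + 4 * C * |K|
  refine ⟨max (K - x + 2) (M + 2 * C * |x| + 1 + C), fun a b c d hdet hK => ?_⟩
  rcases Nat.eq_zero_or_pos c with rfl | hc
  · obtain ⟨rfl, rfl⟩ : a = 1 ∧ d = 1 := by simpa using hdet
    push_cast at hK ⊢
    exact le_max_of_le_left (by linarith)
  have hdetR : (a : ℝ) * d = b * c + 1 := by exact_mod_cast hdet
  have ha : (1 : ℝ) ≤ a := by exact_mod_cast Nat.pos_of_ne_zero (by rintro rfl; simp at hdet)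
  have hd : (1 : ℝ) ≤ d := by exact_mod_cast Nat.pos_of_ne_zero (by rintro rfl; simp at hdet)
  have hc : (1 : ℝ) ≤ c := by exact_mod_cast hc
  have hb : (0 : ℝ) ≤ b := b.cast_nonneg
  set P : ℝ := a * c
  have hP : 1 ≤ P := one_le_mul_of_one_le_of_one_le ha hc
  set u : ℝ := 2 * P * x + a * d + b * c
  -- Completing the square: `4ac (ax + b)(cx + d) = (2acx + ad + bc)² - 1`, which bounds `ac`.
  have hu : u ^ 2 + 4 * P ^ 2 * y ^ 2 ≤ 1 + 4 * P * K := by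
    have : 4 * P * ((a * x + b) * (c * x + d)) = u ^ 2 - 1 := by
      simp only [u, P]; linear_combination (-(a * d : ℝ) + b * c - 1) * hdetR
    nlinarith
  have hPC : P ≤ C := by
    rw [le_div_iff₀ (by positivity)]
    nlinarith [le_abs_self K, abs_nonneg K]
  have huM : u ≤ M := by
    have hu2 : u ^ 2 ≤ M := by nlinarith [le_abs_self K, abs_nonneg K, neg_abs_le K]
    have hM : 1 ≤ M := le_add_of_nonneg_right (by positivity)
    nlinarith
  refine le_max_of_le_right ?_
  nlinarith [le_abs_self x, neg_abs_le x, abs_nonneg x]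

variable {θ : ℝ}

theorem cutSector_eq (hθ0 : 0 ≤ θ) (hθπ : θ < π) :
    cutSector θ = {z | 0 < z.im} ∪ {z | 0 < z.re * Real.sin θ + z.im * Real.cos θ} := by
  ext z
  have hrot : z.re * Real.sin θ + z.im * Real.cos θ = ‖z‖ * Real.sin (arg z + θ) := by
    rw [Real.sin_add, ← norm_mul_cos_arg, ← norm_mul_sin_arg]; ring
  simp only [cutSector, mem_ofPred_eq, mem_union, hrot]
  have hlo := neg_pi_lt_arg z
  have hhi := arg_le_pi z
  constructor
  · rintro ⟨hz, hθarg, hπarg⟩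
    have hnorm : 0 < ‖z‖ := norm_pos_iff.2 hz
    rcases lt_or_ge 0 (arg z) with harg | harg
    · left
      rw [← norm_mul_sin_arg]
      exact mul_pos hnorm (Real.sin_pos_of_pos_of_lt_pi harg hπarg)
    · right
      exact mul_pos hnorm (Real.sin_pos_of_pos_of_lt_pi (by linarith) (by linarith))
  · rintro (him | hpos)
    · refine ⟨fun h => by simp [h] at him, ?_, arg_lt_pi_iff.2 (Or.inr him.ne')⟩
      by_contra! h
      have := mul_nonpos_of_nonneg_of_nonpos (norm_nonneg z)
        (Real.sin_nonpos_of_nonpos_of_neg_pi_le (by linarith) hlo.le)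
      rw [norm_mul_sin_arg] at this
      linarith
    · have hz : z ≠ 0 := by rintro rfl; simp at hpos
      have hsin := pos_of_mul_pos_right hpos (norm_nonneg z)
      refine ⟨hz, ?_, ?_⟩
      · by_contra! h
        exact hsin.not_ge (Real.sin_nonpos_of_nonpos_of_neg_pi_le (by linarith) (by linarith))
      · by_contra! h
        have : 0 ≤ Real.sin (arg z + θ - π) :=
          Real.sin_nonneg_of_nonneg_of_le_pi (by linarith) (by linarith)
        rw [Real.sin_sub_pi] at this
        linarith

theorem isOpen_cutSector (hθ0 : 0 ≤ θ) (hθπ : θ < π) : IsOpen (cutSector θ) := by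
  rw [cutSector_eq hθ0 hθπ]
  exact (isOpen_lt continuous_const continuous_im).union
    (isOpen_lt continuous_const (by fun_prop))

theorem cutSector_subset_slitPlane : cutSector θ ⊆ slitPlane :=
  fun _ hz => mem_slitPlane_iff_arg.2 ⟨hz.2.2.ne, hz.1⟩

theorem mem_cutSector_of_im_nonneg (hθ0 : 0 < θ) (hθπ : θ < π) {z : ℂ} (hz : z ∈ slitPlane)
    (him : 0 ≤ z.im) : z ∈ cutSector θ := by
  rw [cutSector_eq hθ0.le hθπ]
  rcases him.lt_or_eq with him | him
  · exact Or.inl him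
  · have hre : 0 < z.re := (mem_slitPlane_iff.1 hz).resolve_right (by simp [him])
    right
    show 0 < z.re * Real.sin θ + z.im * Real.cos θ
    rw [← him, zero_mul, add_zero]
    exact mul_pos hre (Real.sin_pos_of_pos_of_lt_pi hθ0 hθπ)

theorem add_one_mem_cutSector (hθ0 : 0 ≤ θ) (hθπ : θ < π) {z : ℂ} (hz : z ∈ cutSector θ) :
    z + 1 ∈ cutSector θ := by
  have hsin : 0 ≤ Real.sin θ := Real.sin_nonneg_of_nonneg_of_le_pi hθ0 hθπ.le
  rw [cutSector_eq hθ0 hθπ] at hz ⊢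
  simp only [mem_union, mem_ofPred_eq, add_re, add_im, one_re, one_im, add_zero] at hz ⊢
  exact hz.imp id fun h => by linarith

theorem div_add_one_mem_cutSector (hθ0 : 0 ≤ θ) (hθπ : θ < π) {z : ℂ} (hz : z ∈ cutSector θ) :
    z / (z + 1) ∈ cutSector θ := by
  have hsin : 0 ≤ Real.sin θ := Real.sin_nonneg_of_nonneg_of_le_pi hθ0 hθπ.le
  have hN : 0 < normSq (z + 1) := normSq_pos.2 <|
    slitPlane_ne_zero (cutSector_subset_slitPlane (add_one_mem_cutSector hθ0 hθπ hz))
  rw [cutSector_eq hθ0 hθπ] at hz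
  rw [← mobius_one_zero_one_one, cutSector_eq hθ0 hθπ]
  simp only [mem_union, mem_ofPred_eq, re_mobius,
    im_mobius (show 1 * 1 = 0 * 1 + 1 by rfl)] at hz ⊢
  push_cast
  simp only [one_mul, add_zero]
  refine hz.imp (fun h => by positivity) fun h => ?_
  rw [div_mul_eq_mul_div, div_mul_eq_mul_div, ← add_div]
  apply div_pos _ hN
  nlinarith [sq_nonneg z.re, sq_nonneg z.im]

theorem exists_sum_lt_of_mobius_not_mem_cutSector (hθ0 : 0 < θ) (hθπ : θ < π) {z : ℂ}
    (hz : z.im < 0) : ∃ E : ℕ, ∀ a b c d : ℕ, a * d = b * c + 1 →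
      mobius a b c d z ∉ cutSector θ → a + b + c + d < E := by
  have hsin : 0 < Real.sin θ := Real.sin_pos_of_pos_of_lt_pi hθ0 hθπ
  obtain ⟨E, hE⟩ :=
    exists_sum_le_of_det_eq_one z.re z.im (-(z.im * Real.cos θ) / Real.sin θ) hz.ne
  refine ⟨⌊E⌋₊ + 1, fun a b c d hdet hw => Nat.lt_succ_of_le (Nat.le_floor ?_)⟩
  have hN : 0 < normSq (c * z + d) :=
    normSq_pos.2 (natCast_mul_add_natCast_ne_zero hz (by rintro rfl; simp at hdet))
  rw [cutSector_eq hθ0.le hθπ] at hw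
  simp only [mem_union, mem_ofPred_eq, not_or, not_lt, re_mobius, im_mobius hdet] at hw
  push_cast
  refine hE a b c d hdet ((le_div_iff₀ hsin).2 ?_)
  rw [div_mul_eq_mul_div, div_mul_eq_mul_div, ← add_div] at hw
  linarith [(div_le_iff₀ hN).1 hw.2]

def domain (θ : ℝ) : ℕ → Set ℂ
  | 0 => cutSector θ
  | n + 1 => {z | z ∈ slitPlane ∧ z + 1 ∈ domain θ n ∧ z / (z + 1) ∈ domain θ n}

def extend (s : ℂ) (ψ : ℂ → ℂ) : ℕ → ℂ → ℂ
  | 0 => ψ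
  | n + 1 => fun z => extend s ψ n (z + 1) + (z + 1) ^ s * extend s ψ n (z / (z + 1))

theorem domain_subset_slitPlane : ∀ n, domain θ n ⊆ slitPlane
  | 0 => cutSector_subset_slitPlane
  | _ + 1 => fun _ hz => hz.1

theorem domain_subset_domain_succ (hθ0 : 0 ≤ θ) (hθπ : θ < π) :
    ∀ n, domain θ n ⊆ domain θ (n + 1)
  | 0 => fun _ hz => ⟨cutSector_subset_slitPlane hz, add_one_mem_cutSector hθ0 hθπ hz,
      div_add_one_mem_cutSector hθ0 hθπ hz⟩
  | n + 1 => fun _ hz => ⟨hz.1, domain_subset_domain_succ hθ0 hθπ n hz.2.1,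
      domain_subset_domain_succ hθ0 hθπ n hz.2.2⟩

theorem monotone_domain (hθ0 : 0 ≤ θ) (hθπ : θ < π) : Monotone (domain θ) :=
  monotone_nat_of_le_succ (domain_subset_domain_succ hθ0 hθπ)

theorem isOpen_domain (hθ0 : 0 ≤ θ) (hθπ : θ < π) : ∀ n, IsOpen (domain θ n)
  | 0 => isOpen_cutSector hθ0 hθπ
  | n + 1 => by
    have ih := isOpen_domain hθ0 hθπ n
    have hU : IsOpen (slitPlane ∩ (· + 1) ⁻¹' domain θ n) :=
      isOpen_slitPlane.inter (ih.preimage (continuous_add_const 1))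
    have hV : ContinuousOn (fun z : ℂ => z / (z + 1)) (slitPlane ∩ (· + 1) ⁻¹' domain θ n) :=
      continuousOn_id.div (continuousOn_id.add continuousOn_const)
        fun z hz => slitPlane_ne_zero (domain_subset_slitPlane n hz.2)
    have := hV.isOpen_inter_preimage hU ih
    rwa [inter_assoc] at this

theorem mobius_mem_domain (hθ0 : 0 ≤ θ) (hθπ : θ < π) {z : ℂ} (hz : z.im < 0) {E : ℕ}
    (hE : ∀ a b c d : ℕ, a * d = b * c + 1 → mobius a b c d z ∉ cutSector θ → a + b + c + d < E) :
    ∀ n a b c d : ℕ, a * d = b * c + 1 → E ≤ a + b + c + d + n → mobius a b c d z ∈ domain θ n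
  | 0, a, b, c, d, hdet, hn => by
    by_contra h
    exact (hE a b c d hdet h).not_ge hn
  | n + 1, a, b, c, d, hdet, hn => by
    have ha : a ≠ 0 := by rintro rfl; simp at hdet
    have hd : d ≠ 0 := by rintro rfl; simp at hdet
    have hden := natCast_mul_add_natCast_ne_zero (c := c) hz hd
    refine ⟨mem_slitPlane_iff.2 (Or.inr ?_), ?_, ?_⟩
    · rw [im_mobius hdet]
      exact (div_neg_of_neg_of_pos hz (normSq_pos.2 hden)).ne
    · rw [mobius_add_one hden]
      exact mobius_mem_domain hθ0 hθπ hz hE n _ _ _ _ (by rw [add_mul, hdet]; ring) (by omega)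
    · rw [mobius_div_mobius_add_one hden]
      exact mobius_mem_domain hθ0 hθπ hz hE n _ _ _ _ (by rw [mul_add, hdet]; ring) (by omega)

theorem exists_mem_domain (hθ0 : 0 < θ) (hθπ : θ < π) {z : ℂ} (hz : z ∈ slitPlane) :
    ∃ n, z ∈ domain θ n := by
  rcases le_or_gt 0 z.im with him | him
  · exact ⟨0, mem_cutSector_of_im_nonneg hθ0 hθπ hz him⟩
  obtain ⟨E, hE⟩ := exists_sum_lt_of_mobius_not_mem_cutSector hθ0 hθπ him
  refine ⟨E, ?_⟩
  rw [← mobius_one_zero_zero_one z]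
  exact mobius_mem_domain hθ0.le hθπ him hE E 1 0 0 1 rfl (by omega)

variable {s : ℂ} {ψ : ℂ → ℂ}

theorem differentiableOn_extend (hθ0 : 0 ≤ θ) (hθπ : θ < π)
    (hψ : DifferentiableOn ℂ ψ (cutSector θ)) : ∀ n, DifferentiableOn ℂ (extend s ψ n) (domain θ n)
  | 0 => hψ
  | n + 1 => by
    rintro z ⟨-, hT, hV⟩
    have ih := differentiableOn_extend hθ0 hθπ hψ n
    have hopen := isOpen_domain hθ0 hθπ n
    have hz1 : z + 1 ∈ slitPlane := domain_subset_slitPlane n hT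
    have hT' : DifferentiableAt ℂ (fun w => extend s ψ n (w + 1)) z :=
      (ih.differentiableAt (hopen.mem_nhds hT)).comp z (differentiableAt_id.add_const 1)
    have hV' : DifferentiableAt ℂ (fun w => extend s ψ n (w / (w + 1))) z :=
      (ih.differentiableAt (hopen.mem_nhds hV)).comp z
        (differentiableAt_id.div (differentiableAt_id.add_const 1) (slitPlane_ne_zero hz1))
    have hpow : DifferentiableAt ℂ (fun w : ℂ => (w + 1) ^ s) z :=
      (differentiableAt_id.add_const 1).cpow (differentiableAt_const s) hz1
    exact (hT'.add (hpow.mul hV')).differentiableWithinAt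

theorem extend_succ_eqOn (hθ0 : 0 ≤ θ) (hθπ : θ < π)
    (hfe : ∀ z ∈ cutSector θ, z + 1 ∈ cutSector θ → z / (z + 1) ∈ cutSector θ →
      ψ z = ψ (z + 1) + (z + 1) ^ s * ψ (z / (z + 1))) :
    ∀ n, EqOn (extend s ψ (n + 1)) (extend s ψ n) (domain θ n)
  | 0 => fun z hz =>
    (hfe z hz (add_one_mem_cutSector hθ0 hθπ hz) (div_add_one_mem_cutSector hθ0 hθπ hz)).symm
  | n + 1 => by
    rintro z ⟨-, hT, hV⟩
    have ih := extend_succ_eqOn hθ0 hθπ hfe n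
    show extend s ψ (n + 1) (z + 1) + (z + 1) ^ s * extend s ψ (n + 1) (z / (z + 1)) = _
    rw [ih hT, ih hV]
    rfl

end PeriodFunction

theorem period_function_continuation_general (μ θ : ℝ) (hθ0 : 0 < θ) (hθπ : θ < Real.pi)
    (ψ : ℂ → ℂ) (hψ : DifferentiableOn ℂ ψ (cutSector θ))
    (hfe : ∀ z ∈ cutSector θ, z + 1 ∈ cutSector θ → z / (z + 1) ∈ cutSector θ →
      ψ z = ψ (z + 1) + (z + 1) ^ (-(2 * (μ : ℂ)) - 1) * ψ (z / (z + 1))) :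
    ∃ Ψ : ℂ → ℂ,
      DifferentiableOn ℂ Ψ {z : ℂ | z ≠ 0 ∧ |Complex.arg z| < Real.pi} ∧
      ∀ z ∈ cutSector θ, Ψ z = ψ z := by
  obtain ⟨Ψ, hΨ, hΨψ⟩ := PeriodFunction.exists_differentiableOn_iUnion
    (PeriodFunction.isOpen_domain hθ0.le hθπ) (PeriodFunction.monotone_domain hθ0.le hθπ)
    (PeriodFunction.differentiableOn_extend hθ0.le hθπ hψ)
    (PeriodFunction.extend_succ_eqOn hθ0.le hθπ hfe)
  refine ⟨Ψ, hΨ.mono fun z hz => Set.mem_iUnion.2 ?_, hΨψ 0⟩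
  exact PeriodFunction.exists_mem_domain hθ0 hθπ
    (mem_slitPlane_iff_arg.2 ⟨(abs_lt.1 hz.2).2.ne, hz.1⟩)

/-- a holomorphic solution on `S_θ` of the three-term functional equation
`ψ(z) = ψ(z+1) + (z+1)^{-2μ-1} ψ(z/(z+1))` extends holomorphically to the cut plane
`{z ≠ 0 : |arg z| < π} = ℂ ∖ (-∞, 0]`. -/
theorem period_function_continuation (μ θ : ℝ) (hμ : 0 < μ) (hθ0 : 0 < θ) (hθπ : θ < Real.pi)
    (ψ : ℂ → ℂ) (hψ : DifferentiableOn ℂ ψ (cutSector θ))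
    (hfe : ∀ z ∈ cutSector θ, z + 1 ∈ cutSector θ → z / (z + 1) ∈ cutSector θ →
      ψ z = ψ (z + 1) + (z + 1) ^ (-(2 * (μ : ℂ)) - 1) * ψ (z / (z + 1))) :
    ∃ Ψ : ℂ → ℂ,
      DifferentiableOn ℂ Ψ {z : ℂ | z ≠ 0 ∧ |Complex.arg z| < Real.pi} ∧
      ∀ z ∈ cutSector θ, Ψ z = ψ z :=
  period_function_continuation_general μ θ hθ0 hθπ ψ hψ hfe
end
end

section
/- Let a : ℕ → ℂ be such that ∑_{n≥1} |a(n)| e^{−2πny} < ∞ for every y > 0, and let g : ℂ → ℂ be an entire function with g(z) = ∑_{n≥1} a(n) e^{2πinz} for all z with Im(z) > 0. If there exist constants C > 0 and 0 ≤ α < 2π such that |g(z)| ≤ C·e^{α|Im(z)|} for all z ∈ ℂ, then a(n) = 0 for all n ≥ 1 and g is identically zero. -/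
/-!
On the upper half-plane `g` is a power series in `q = e^{2πiz}` converging on the unit disc, so
`g` is `1`-periodic and tends to `0` as `Im z → ∞`. Hence `g = F ∘ q` with `F` entire and
`F 0 = 0`. Since `Im z = -log |q| / 2π`, the bound `|g z| ≤ C e^{α |Im z|}` becomes
`|F q| ≤ C |q|^{α/2π}` for `|q| ≥ 1`, so `F q / q → 0` at infinity because `α < 2π`; Liouville's
theorem applied to the entire function `(F q - F 0) / q` then forces `F = 0`. Finally, the power
series `∑ a(n) qⁿ` vanishes on the unit disc, so all its coefficients vanish.
-/

open Complex Set Filter Topology Function Function.Periodic FormalMultilinearSeries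
open scoped Real

theorem Differentiable.apply_eq_apply_zero_of_tendsto_div_cocompact {f : ℂ → ℂ}
    (hf : Differentiable ℂ f) (hlim : Tendsto (fun z => f z / z) (cocompact ℂ) (𝓝 0)) (z : ℂ) :
    f z = f 0 := by
  have hd : Differentiable ℂ (dslope f 0) := fun w =>
    ((differentiableOn_dslope univ_mem).mpr hf.differentiableOn).differentiableAt univ_mem
  have hinv : Tendsto (fun z : ℂ => f 0 / z) (cocompact ℂ) (𝓝 0) := by
    simpa [div_eq_mul_inv, ← Metric.cobounded_eq_cocompact] using
      (tendsto_inv₀_cobounded (α := ℂ)).const_mul (f 0)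
  have hslope : dslope f 0 =ᶠ[cocompact ℂ] fun z => f z / z - f 0 / z := by
    filter_upwards [(isCompact_singleton (x := (0 : ℂ))).compl_mem_cocompact] with w hw
    rw [dslope_of_ne _ hw, slope_def_field, sub_zero, sub_div]
  have hlim' := hlim.sub hinv
  rw [sub_zero] at hlim'
  have h0 := hd.apply_eq_of_tendsto_cocompact z (hlim'.congr' hslope.symm)
  simpa [h0, sub_eq_zero] using (sub_smul_dslope f 0 z).symm

theorem FormalMultilinearSeries.one_le_radius_ofScalars {c : ℕ → ℂ}
    (hc : ∀ r : ℝ, 0 < r → r < 1 → Summable fun n => ‖c (n + 1)‖ * r ^ (n + 1)) :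
    1 ≤ (ofScalars ℂ c).radius := by
  refine ENNReal.le_of_forall_pos_nnreal_lt fun r hr0 hr1 => ?_
  refine le_radius_of_summable_norm _ ((summable_nat_add_iff 1).mp ?_)
  simpa only [ofScalars_norm] using hc r hr0 (by exact_mod_cast hr1)

theorem FormalMultilinearSeries.hasSum_ofScalars_succ {c : ℕ → ℂ} {P : ℂ → ℂ} {r : ENNReal}
    (hP : HasFPowerSeriesOnBall P (ofScalars ℂ c) 0 r) (hc0 : c 0 = 0) {q : ℂ}
    (hq : ‖q‖ₑ < r) : HasSum (fun n => c (n + 1) * q ^ (n + 1)) (P q) := by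
  have hsum := hP.hasSum (Metric.mem_eball.mpr (by simpa using hq))
  simp only [ofScalars_apply_eq, smul_eq_mul, zero_add] at hsum
  simpa [hc0] using (hasSum_nat_add_iff' 1).mpr hsum

namespace Function.Periodic

theorem periodic_qParam {h : ℝ} (hh : h ≠ 0) : Periodic (qParam h) h := by
  intro z
  have hh' : (h : ℂ) ≠ 0 := ofReal_ne_zero.mpr hh
  rw [qParam, qParam, show 2 * π * I * (z + h) / h = 2 * π * I * z / h + 2 * π * I by
    field_simp, exp_add, exp_two_pi_mul_I, mul_one]

theorem cexp_two_pi_I_mul_natCast_mul (n : ℕ) (z : ℂ) :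
    exp (2 * π * I * n * z) = qParam 1 z ^ n := by
  rw [qParam, ← exp_nat_mul]
  congr 1
  push_cast
  ring

theorem exists_qParam_eq {h : ℝ} (hh : 0 < h) {q : ℂ} (hq0 : q ≠ 0) (hq1 : ‖q‖ < 1) :
    ∃ z : ℂ, 0 < z.im ∧ qParam h z = q := by
  refine ⟨invQParam h q, ?_, qParam_right_inv hh.ne' hq0⟩
  rw [im_invQParam]
  exact mul_pos_of_neg_of_neg (div_neg_of_neg_of_pos (neg_neg_of_pos hh) (by positivity))
    (Real.log_neg (norm_pos_iff.mpr hq0) hq1)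

theorem tendsto_comap_im_of_eq_comp_qParam {g P : ℂ → ℂ} {h : ℝ} (hh : 0 < h)
    (hP : ContinuousAt P 0) (hgP : ∀ z : ℂ, 0 < z.im → g z = P (qParam h z)) :
    Tendsto g (comap im atTop) (𝓝 (P 0)) := by
  refine (hP.tendsto.comp ((qParam_tendsto hh).mono_right nhdsWithin_le_nhds)).congr' ?_
  filter_upwards [preimage_mem_comap (Ioi_mem_atTop 0)] with z hz
  exact (hgP z hz).symm

theorem differentiable_cuspFunction {f : ℂ → ℂ} {h : ℝ} (hh : 0 < h) (hf : Periodic f h)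
    (hfd : Differentiable ℂ f) (hbd : BoundedAtFilter (comap im atTop) f) :
    Differentiable ℂ (cuspFunction h f) := by
  intro q
  rcases eq_or_ne q 0 with rfl | hq
  · exact differentiableAt_cuspFunction_zero hh hf (.of_forall hfd) hbd
  · rw [← qParam_right_inv hh.ne' hq]
    exact differentiableAt_cuspFunction hh.ne' hf (hfd _)

theorem norm_cuspFunction_le {f : ℂ → ℂ} {h C α : ℝ} (hh : 0 < h)
    (hbd : ∀ z : ℂ, ‖f z‖ ≤ C * Real.exp (α * |z.im|)) {q : ℂ} (hq : 1 ≤ ‖q‖) :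
    ‖cuspFunction h f q‖ ≤ C * ‖q‖ ^ (α * h / (2 * π)) := by
  have hq0 : q ≠ 0 := norm_pos_iff.mp (one_pos.trans_le hq)
  have him : |(invQParam h q).im| = h / (2 * π) * Real.log ‖q‖ := by
    rw [im_invQParam, neg_div, neg_mul, abs_neg,
      abs_of_nonneg (mul_nonneg (by positivity) (Real.log_nonneg hq))]
  rw [cuspFunction_eq_of_nonzero _ _ hq0, Real.rpow_def_of_pos (norm_pos_iff.mpr hq0)]
  convert hbd (invQParam h q) using 3
  rw [him]
  ring

theorem tendsto_cuspFunction_div_cocompact {f : ℂ → ℂ} {h C α : ℝ} (hh : 0 < h)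
    (hbd : ∀ z : ℂ, ‖f z‖ ≤ C * Real.exp (α * |z.im|)) (hα : α * h < 2 * π) :
    Tendsto (fun q => cuspFunction h f q / q) (cocompact ℂ) (𝓝 0) := by
  set β := α * h / (2 * π)
  have hβ : β - 1 < 0 := by
    rw [sub_neg, div_lt_one (by positivity)]
    exact hα
  have hdecay : Tendsto (fun q : ℂ => C * ‖q‖ ^ (β - 1)) (cocompact ℂ) (𝓝 0) := by
    simpa using ((tendsto_rpow_neg_atTop (neg_pos.mpr hβ)).comp
      tendsto_norm_cocompact_atTop).const_mul C
  refine squeeze_zero_norm' ?_ hdecay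
  filter_upwards [tendsto_norm_cocompact_atTop.eventually_ge_atTop 1] with q hq
  have hq0 : 0 < ‖q‖ := one_pos.trans_le hq
  rw [norm_div, Real.rpow_sub hq0, Real.rpow_one, ← mul_div_assoc]
  exact div_le_div_of_nonneg_right (norm_cuspFunction_le hh hbd hq) hq0.le

theorem eq_zero_of_norm_le_exp {f : ℂ → ℂ} {h C α : ℝ} (hh : 0 < h) (hf : Periodic f h)
    (hfd : Differentiable ℂ f) (hzero : ZeroAtFilter (comap im atTop) f)
    (hbd : ∀ z : ℂ, ‖f z‖ ≤ C * Real.exp (α * |z.im|)) (hα : α * h < 2 * π) (z : ℂ) :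
    f z = 0 := by
  have hF := hf.differentiable_cuspFunction hh hfd hzero.boundedAtFilter
  rw [← eq_cuspFunction hh.ne' hf,
    hF.apply_eq_apply_zero_of_tendsto_div_cocompact (tendsto_cuspFunction_div_cocompact hh hbd hα),
    cuspFunction_zero_of_zero_at_inf hh hzero]

end Function.Periodic

theorem Differentiable.periodic_of_eq_on_im_pos {g φ : ℂ → ℂ} {h : ℝ} (hg : Differentiable ℂ g)
    (hφ : Periodic φ h) (hgφ : ∀ z : ℂ, 0 < z.im → g z = φ z) : Periodic g h := by
  have hshift : (fun z => g (z + h)) =ᶠ[𝓝 I] g := by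
    filter_upwards [(isOpen_lt continuous_const continuous_im).mem_nhds (by simp : (0 : ℝ) < I.im)]
      with z hz
    rw [hgφ z hz, hgφ (z + h) (by simpa using hz), hφ]
  have hshift_an : AnalyticOnNhd ℂ (fun z => g (z + h)) univ :=
    analyticOnNhd_univ_iff_differentiable.mpr (hg.comp (differentiable_id.add_const _))
  intro z
  exact congrFun (hshift_an.eq_of_eventuallyEq
    (analyticOnNhd_univ_iff_differentiable.mpr hg) hshift) z

theorem summable_mul_pow_of_summable_mul_exp {b : ℕ → ℝ}
    (hb : ∀ y : ℝ, 0 < y → Summable fun n : ℕ => b n * Real.exp (-2 * π * (n + 1) * y))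
    {r : ℝ} (hr0 : 0 < r) (hr1 : r < 1) : Summable fun n => b n * r ^ (n + 1) := by
  have hy : 0 < -Real.log r / (2 * π) :=
    div_pos (neg_pos.mpr (Real.log_neg hr0 hr1)) (by positivity)
  refine (hb _ hy).congr fun n => ?_
  rw [← Real.rpow_natCast, Real.rpow_def_of_pos hr0]
  congr 2
  push_cast
  field_simp

theorem exists_hasFPowerSeriesOnBall_eq_comp_qParam (a : ℕ → ℂ)
    (hsum : ∀ y : ℝ, 0 < y →
      Summable fun n : ℕ => ‖a (n + 1)‖ * Real.exp (-2 * π * (n + 1) * y))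
    {g : ℂ → ℂ} (hrep : ∀ z : ℂ, 0 < z.im →
      g z = ∑' n : ℕ, a (n + 1) * exp (2 * π * I * (n + 1) * z)) :
    ∃ P : ℂ → ℂ, HasFPowerSeriesOnBall P (ofScalars ℂ (update a 0 0)) 0 1 ∧
      ∀ z : ℂ, 0 < z.im → g z = P (qParam 1 z) := by
  set c := update a 0 0
  have hc : ∀ n : ℕ, c (n + 1) = a (n + 1) := fun n => update_of_ne n.succ_ne_zero _ _
  have hrad : 1 ≤ (ofScalars ℂ c).radius := one_le_radius_ofScalars fun r hr0 hr1 => by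
    simpa only [hc] using summable_mul_pow_of_summable_mul_exp hsum hr0 hr1
  have hP := ((ofScalars ℂ c).hasFPowerSeriesOnBall (one_pos.trans_le hrad)).mono one_pos hrad
  refine ⟨_, hP, fun z hz => ?_⟩
  rw [hrep z hz, ← (hasSum_ofScalars_succ hP (update_self 0 0 a) _).tsum_eq]
  · congr! 2 with n
    rw [hc, ← cexp_two_pi_I_mul_natCast_mul]
    push_cast
    rfl
  · simpa [← ofReal_norm] using norm_qParam_lt_one one_pos hz

theorem entire_periodic_vanishes_general (a : ℕ → ℂ)
    (hsum : ∀ y : ℝ, 0 < y →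
      Summable fun n : ℕ => ‖a (n + 1)‖ * Real.exp (-2 * Real.pi * (n + 1) * y))
    (g : ℂ → ℂ) (hg : Differentiable ℂ g)
    (hrep : ∀ z : ℂ, 0 < z.im →
      g z = ∑' n : ℕ, a (n + 1) * Complex.exp (2 * Real.pi * Complex.I * (n + 1) * z))
    (C α : ℝ) (hα : α < 2 * Real.pi)
    (hbd : ∀ z : ℂ, ‖g z‖ ≤ C * Real.exp (α * |z.im|)) :
    (∀ n : ℕ, 1 ≤ n → a n = 0) ∧ ∀ z : ℂ, g z = 0 := by
  obtain ⟨P, hP, hgP⟩ := exists_hasFPowerSeriesOnBall_eq_comp_qParam a hsum hrep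
  have hP0 : P 0 = 0 := by simpa using (hP.coeff_zero fun _ => 0).symm
  have hper : Periodic g 1 :=
    hg.periodic_of_eq_on_im_pos ((periodic_qParam one_ne_zero).comp P) hgP
  have hzero : Tendsto g (comap im atTop) (𝓝 0) := by
    simpa only [hP0] using
      tendsto_comap_im_of_eq_comp_qParam one_pos hP.hasFPowerSeriesAt.continuousAt hgP
  have hgzero : ∀ z, g z = 0 :=
    hper.eq_zero_of_norm_le_exp one_pos hg hzero hbd (by simpa using hα)
  refine ⟨fun n hn => ?_, hgzero⟩
  have hPzero : EqOn P 0 (Metric.eball 0 1) := by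
    intro q hq
    rcases eq_or_ne q 0 with rfl | hq0
    · exact hP0
    obtain ⟨z, hz, rfl⟩ := exists_qParam_eq one_pos hq0 (by simpa [← ofReal_norm] using hq)
    rw [← hgP z hz, hgzero, Pi.zero_apply]
  have hcoeff := (ofScalars_series_eq_zero ℂ).mp (hP.congr hPzero).hasFPowerSeriesAt.eq_zero
  simpa [update_of_ne (by omega : n ≠ 0)] using congrFun hcoeff n

/-- an entire function which, on the upper half-plane, is an absolutely
convergent Fourier series `∑_{n≥1} a(n) e^{2πinz}` and which satisfies the growth bound
`|g(z)| ≤ C e^{α|Im z|}` with `0 ≤ α < 2π`, vanishes identically (and all `a(n) = 0`). -/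
theorem entire_periodic_vanishes (a : ℕ → ℂ)
    (hsum : ∀ y : ℝ, 0 < y →
      Summable fun n : ℕ => ‖a (n + 1)‖ * Real.exp (-2 * Real.pi * (n + 1) * y))
    (g : ℂ → ℂ) (hg : Differentiable ℂ g)
    (hrep : ∀ z : ℂ, 0 < z.im →
      g z = ∑' n : ℕ, a (n + 1) * Complex.exp (2 * Real.pi * Complex.I * (n + 1) * z))
    (C α : ℝ) (hC : 0 < C) (hα0 : 0 ≤ α) (hα : α < 2 * Real.pi)
    (hbd : ∀ z : ℂ, ‖g z‖ ≤ C * Real.exp (α * |z.im|)) :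
    (∀ n : ℕ, 1 ≤ n → a n = 0) ∧ ∀ z : ℂ, g z = 0 :=
  entire_periodic_vanishes_general a hsum g hg hrep C α hα hbd
end
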